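/- arXiv:2108.08774 — 2 statements merged into one kernel-verified Lean document; each statement's English description precedes it below -/
import Mathlib

section
/- Let X be supported on 𝒳 = {x_1,...,x_n} with probabilities p_i := P_X(x_i) > 0, let 1 ≤ k < n, and let α ∈ (0,1)∪(1,∞). Then the minimal expected α-loss for k guesses equals the value of the finite-dimensional optimization problem: ME^{(k)}_α(P_X) = min over (t_1,...,t_n) ∈ ℝ^n with Σ_{i=1}^{n} t_i = k and 0 ≤ t_i ≤ 1 for all i, of (α/(α−1)) · Σ_{i=1}^{n} p_i · (1 − t_i^{(α−1)/α}). -/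
open Finset
open scoped ENNReal

/-- A `k`-guess strategy on `Fin n` is a probability mass function on `k`-tuples. -/
def IsStrategy {n k : ℕ} (Q : (Fin k → Fin n) → ℝ) : Prop :=
  (∀ a, 0 ≤ Q a) ∧ ∑ a, Q a = 1

/-- `succProb Q x` is the probability that at least one of the `k` guesses equals `x`. -/
noncomputable def succProb {n k : ℕ} (Q : (Fin k → Fin n) → ℝ) (x : Fin n) : ℝ :=
  ∑ a ∈ Finset.univ.filter (fun a : Fin k → Fin n => ∃ j, a j = x), Q a

/-- The `α`-loss `ℓ_α(t) = (α/(α-1))(1 - t^{(α-1)/α})`, valued in `ℝ≥0∞`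
(it is `+∞` at `t = 0` when `α < 1`). -/
noncomputable def alphaLoss (α t : ℝ) : ℝ≥0∞ :=
  if t = 0 ∧ α < 1 then ⊤
  else ENNReal.ofReal ((α / (α - 1)) * (1 - t ^ ((α - 1) / α)))

/-!
The success vector `(g_Q(x_i))_i` of a strategy lies in `[0,1]^n` and sums to at most `k`, since
each `k`-tuple hits at most `k` points; raising its coordinates until the sum is `k` lands in the
hypersimplex `{t ∈ [0,1]^n | ∑ t_i = k}` and only lowers the loss, `ℓ_α` being antitone.
Conversely, the success vectors form a compact convex set (a linear image of the simplex of
strategies) containing every `0/1` vector with `k` ones (guess that set deterministically).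
Every extreme point of the hypersimplex is such a vector: a point with a fractional coordinate
has a second one, since the sum is an integer, and moving mass between the two both ways shows
that the point is not extreme. By Krein–Milman every point of the hypersimplex is achieved.
-/

namespace Finset

lemma sum_eq_card_filter_of_forall_eq_zero_or_eq_one {ι : Type*} {s : Finset ι}
    {t : ι → ℝ} (h : ∀ i ∈ s, t i = 0 ∨ t i = 1) : ∑ i ∈ s, t i = #(s.filter (t · = 1)) := by
  rw [← sum_boole]
  refine sum_congr rfl fun i hi => ?_
  rcases h i hi with h | h <;> simp [h]

end Finset

def hypersimplex (ι : Type*) [Fintype ι] (k : ℕ) : Set (ι → ℝ) :=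
  {t | ∑ i, t i = k ∧ ∀ i, 0 ≤ t i ∧ t i ≤ 1}

section Hypersimplex

variable {ι : Type*} [Fintype ι]

lemma convex_hypersimplex (k : ℕ) : Convex ℝ (hypersimplex ι k) := by
  rintro t ⟨hts, htb⟩ u ⟨hus, hub⟩ a b ha hb hab
  refine ⟨?_, fun i => ⟨?_, ?_⟩⟩
  · simp only [Pi.add_apply, Pi.smul_apply, smul_eq_mul, sum_add_distrib, ← mul_sum, hts, hus]
    rw [← add_mul, hab, one_mul]
  · simp only [Pi.add_apply, Pi.smul_apply, smul_eq_mul]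
    nlinarith [htb i, hub i]
  · simp only [Pi.add_apply, Pi.smul_apply, smul_eq_mul]
    nlinarith [htb i, hub i]

lemma isCompact_hypersimplex (k : ℕ) : IsCompact (hypersimplex ι k) := by
  have hclosed : IsClosed {t : ι → ℝ | ∑ i, t i = k} :=
    isClosed_eq (continuous_finsetSum _ fun i _ => continuous_apply i) continuous_const
  refine (isCompact_Icc (a := (0 : ι → ℝ)) (b := 1)).of_isClosed_subset ?_ ?_
  · convert hclosed.inter (isClosed_Icc (a := (0 : ι → ℝ)) (b := 1)) using 1
    ext t
    simp [hypersimplex, Pi.le_def, forall_and]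
  · exact fun t ht => ⟨fun i => (ht.2 i).1, fun i => (ht.2 i).2⟩

lemma add_smul_single_sub_single_mem_hypersimplex [DecidableEq ι] {k : ℕ} {t : ι → ℝ}
    (ht : t ∈ hypersimplex ι k) {i j : ι} (hij : i ≠ j) {δ : ℝ}
    (hi : 0 ≤ t i + δ ∧ t i + δ ≤ 1) (hj : 0 ≤ t j - δ ∧ t j - δ ≤ 1) :
    t + δ • (Pi.single i 1 - Pi.single j 1) ∈ hypersimplex ι k := by
  refine ⟨?_, fun m => ?_⟩
  · simp [sum_add_distrib, ← mul_sum, ht.1]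
  · rcases eq_or_ne m i with rfl | hmi
    · simpa [hij, ← sub_eq_add_neg] using hi
    rcases eq_or_ne m j with rfl | hmj
    · simpa [hmi, ← sub_eq_add_neg] using hj
    · simpa [hmi, hmj] using ht.2 m

lemma exists_ne_mem_Ioo_of_mem_hypersimplex [DecidableEq ι] {k : ℕ} {t : ι → ℝ}
    (ht : t ∈ hypersimplex ι k) {i : ι} (hi : t i ∈ Set.Ioo 0 1) : ∃ j ≠ i, t j ∈ Set.Ioo 0 1 := by
  by_contra! hno
  have hint : ∀ m ∈ univ.erase i, t m = 0 ∨ t m = 1 := fun m hm =>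
    (ht.2 m).1.eq_or_lt.imp Eq.symm fun h =>
      le_antisymm (ht.2 m).2 (not_lt.1 fun h' => hno m (ne_of_mem_erase hm) ⟨h, h'⟩)
  obtain ⟨z, hz⟩ : ∃ z : ℤ, t i = z := by
    refine ⟨k - #((univ.erase i).filter (t · = 1)), ?_⟩
    have := add_sum_erase univ t (mem_univ i)
    rw [sum_eq_card_filter_of_forall_eq_zero_or_eq_one hint, ht.1] at this
    push_cast
    linarith
  rw [hz] at hi
  have : (0 : ℤ) < z := by exact_mod_cast hi.1
  have : z < 1 := by exact_mod_cast hi.2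
  omega

lemma eq_zero_or_eq_one_of_mem_extremePoints_hypersimplex [DecidableEq ι] {k : ℕ} {t : ι → ℝ}
    (ht : t ∈ (hypersimplex ι k).extremePoints ℝ) (i : ι) : t i = 0 ∨ t i = 1 := by
  by_contra! hfrac
  have hi : t i ∈ Set.Ioo 0 1 :=
    ⟨(ht.1.2 i).1.lt_of_ne' hfrac.1, (ht.1.2 i).2.lt_of_ne hfrac.2⟩
  obtain ⟨j, hji, hj⟩ := exists_ne_mem_Ioo_of_mem_hypersimplex ht.1 hi
  set ε := min (min (t i) (1 - t i)) (min (t j) (1 - t j))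
  have hε : 0 < ε := lt_min (lt_min hi.1 (by linarith [hi.2])) (lt_min hj.1 (by linarith [hj.2]))
  have hεi : ε ≤ t i ∧ ε ≤ 1 - t i := ⟨(min_le_left _ _).trans (min_le_left _ _),
    (min_le_left _ _).trans (min_le_right _ _)⟩
  have hεj : ε ≤ t j ∧ ε ≤ 1 - t j := ⟨(min_le_right _ _).trans (min_le_left _ _),
    (min_le_right _ _).trans (min_le_right _ _)⟩
  set v : ι → ℝ := Pi.single i 1 - Pi.single j 1
  have hplus : t + ε • v ∈ hypersimplex ι k :=
    add_smul_single_sub_single_mem_hypersimplex ht.1 hji.symm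
      ⟨by linarith, by linarith⟩ ⟨by linarith, by linarith⟩
  have hminus : t - ε • v ∈ hypersimplex ι k := by
    rw [sub_eq_add_neg, ← neg_smul]
    exact add_smul_single_sub_single_mem_hypersimplex ht.1 hji.symm
      ⟨by linarith, by linarith⟩ ⟨by linarith, by linarith⟩
  have hfixed := ht.2 hplus hminus (mem_openSegment_add_sub t (ε • v))
  have := congrFun hfixed i
  simp [v, hji.symm] at this
  linarith

lemma exists_mem_hypersimplex_ge {k : ℕ} (hk : k ≤ Fintype.card ι)
    {s : ι → ℝ} (hs : ∀ i, 0 ≤ s i ∧ s i ≤ 1) (hsum : ∑ i, s i ≤ k) :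
    ∃ t ∈ hypersimplex ι k, s ≤ t := by
  set σ := ∑ i, s i
  have hkn : (k : ℝ) ≤ Fintype.card ι := by exact_mod_cast hk
  set lam := (k - σ) / (Fintype.card ι - σ)
  have hlam0 : 0 ≤ lam := div_nonneg (by linarith) (by linarith)
  have hlam1 : lam ≤ 1 := div_le_one_of_le₀ (by linarith) (by linarith)
  have hgap : ∀ i, 0 ≤ lam * (1 - s i) ∧ lam * (1 - s i) ≤ 1 - s i := fun i =>
    ⟨mul_nonneg hlam0 (by linarith [hs i]), mul_le_of_le_one_left (by linarith [hs i]) hlam1⟩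
  refine ⟨fun i => s i + lam * (1 - s i), ⟨?_, fun i => ?_⟩, fun i => ?_⟩
  · -- if `σ = card ι` then also `σ = k`, and the junk value `lam = 0 / 0 = 0` still works
    have hfill : lam * (Fintype.card ι - σ) = k - σ :=
      div_mul_cancel_of_imp fun h => by linarith
    simp only [sum_add_distrib, ← mul_sum, sum_sub_distrib, sum_const, card_univ, nsmul_eq_mul,
      mul_one]
    linarith
  · constructor <;> linarith [hs i, hgap i]
  · linarith [hgap i]

end Hypersimplex

noncomputable def succProbLinearMap (n k : ℕ) : ((Fin k → Fin n) → ℝ) →ₗ[ℝ] Fin n → ℝ where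
  toFun Q := succProb Q
  map_add' _ _ := funext fun _ => sum_add_distrib
  map_smul' _ _ := funext fun _ => (mul_sum _ _ _).symm

section Strategies

variable {n k : ℕ} {Q : (Fin k → Fin n) → ℝ}

lemma isStrategy_single (a : Fin k → Fin n) : IsStrategy (Pi.single a (1 : ℝ)) :=
  ⟨fun b => by by_cases h : b = a <;> simp [h], by simp⟩

lemma succProb_single (a : Fin k → Fin n) (i : Fin n) :
    succProb (Pi.single a (1 : ℝ)) i = (Set.range a).indicator 1 i := by
  simp [succProb, Pi.single_apply, Set.indicator_apply]

lemma exists_strategy_succProb_eq_of_eq_zero_or_eq_one {t : Fin n → ℝ}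
    (ht : t ∈ hypersimplex (Fin n) k) (h01 : ∀ i, t i = 0 ∨ t i = 1) :
    ∃ Q : (Fin k → Fin n) → ℝ, IsStrategy Q ∧ succProb Q = t := by
  set S := univ.filter (t · = 1)
  have hS : #S = k := by
    exact_mod_cast (sum_eq_card_filter_of_forall_eq_zero_or_eq_one fun i _ => h01 i).symm.trans ht.1
  set a : Fin k → Fin n := ⇑(S.orderEmbOfFin hS)
  have hrange : Set.range a = S := S.range_orderEmbOfFin hS
  refine ⟨Pi.single a 1, isStrategy_single a, funext fun i => ?_⟩
  rw [succProb_single, hrange]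
  rcases h01 i with h | h <;> simp [S, h]

lemma hypersimplex_subset_image_succProbLinearMap :
    hypersimplex (Fin n) k ⊆ succProbLinearMap n k '' stdSimplex ℝ (Fin k → Fin n) := by
  have hconv := (convex_stdSimplex ℝ (Fin k → Fin n)).linear_image (succProbLinearMap n k)
  have hclosed := ((isCompact_stdSimplex ℝ (Fin k → Fin n)).image
    (succProbLinearMap n k).continuous_of_finiteDimensional).isClosed
  rw [← closure_convexHull_extremePoints (isCompact_hypersimplex k) (convex_hypersimplex k)]
  refine closure_minimal (convexHull_min (fun t ht => ?_) hconv) hclosed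
  exact exists_strategy_succProb_eq_of_eq_zero_or_eq_one ht.1
    (eq_zero_or_eq_one_of_mem_extremePoints_hypersimplex ht)

lemma succProb_nonneg (hQ : IsStrategy Q) (i : Fin n) : 0 ≤ succProb Q i :=
  sum_nonneg fun a _ => hQ.1 a

lemma succProb_le_one (hQ : IsStrategy Q) (i : Fin n) : succProb Q i ≤ 1 :=
  hQ.2 ▸ sum_le_sum_of_subset_of_nonneg (filter_subset _ _) fun a _ _ => hQ.1 a

lemma sum_succProb_le (hQ : IsStrategy Q) : ∑ i, succProb Q i ≤ k :=
  calc ∑ i, succProb Q i = ∑ a, #(univ.filter fun i => ∃ j, a j = i) * Q a := by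
        simp only [succProb, sum_filter]
        rw [sum_comm]
        refine sum_congr rfl fun a _ => ?_
        rw [← sum_filter, sum_const, nsmul_eq_mul]
    _ ≤ ∑ a, k * Q a := by
        refine sum_le_sum fun a _ => mul_le_mul_of_nonneg_right ?_ (hQ.1 a)
        have himage : (univ.filter fun i => ∃ j, a j = i) = univ.image a := by
          ext i
          simp
        rw [himage]
        exact_mod_cast card_image_le.trans (card_univ.trans (Fintype.card_fin k)).le
    _ = k := by rw [← mul_sum, hQ.2, mul_one]

end Strategies

lemma alphaLoss_antitoneOn {α : ℝ} (hα : 0 < α) : AntitoneOn (alphaLoss α) (Set.Ici 0) := by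
  intro t (ht : 0 ≤ t) t' _ htt'
  rcases lt_or_ge α 1 with hlt | hge
  · rcases ht.eq_or_lt with rfl | ht0
    · simp [alphaLoss, hlt]
    have he : (α - 1) / α ≤ 0 := div_nonpos_of_nonpos_of_nonneg (by linarith) hα.le
    rw [alphaLoss, alphaLoss, if_neg fun h => (ht0.trans_le htt').ne' h.1,
      if_neg fun h => ht0.ne' h.1]
    refine ENNReal.ofReal_le_ofReal (mul_le_mul_of_nonpos_left ?_ ?_)
    · linarith [Real.rpow_le_rpow_of_nonpos ht0 htt' he]
    · exact div_nonpos_of_nonneg_of_nonpos hα.le (by linarith)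
  · have he : 0 ≤ (α - 1) / α := div_nonneg (by linarith) hα.le
    rw [alphaLoss, alphaLoss, if_neg fun h => hge.not_gt h.2, if_neg fun h => hge.not_gt h.2]
    refine ENNReal.ofReal_le_ofReal (mul_le_mul_of_nonneg_left ?_ ?_)
    · linarith [Real.rpow_le_rpow ht htt' he]
    · exact div_nonneg hα.le (by linarith)

theorem minimal_alpha_loss_eq_finite_dim_min_general
    {n k : ℕ} (hkn : k < n)
    (α : ℝ) (hα : 0 < α)
    (p : Fin n → ℝ) :
    sInf {E : ℝ≥0∞ | ∃ Q : (Fin k → Fin n) → ℝ, IsStrategy Q ∧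
        E = ∑ i, ENNReal.ofReal (p i) * alphaLoss α (succProb Q i)} =
      sInf {E : ℝ≥0∞ | ∃ t : Fin n → ℝ,
        (∑ i, t i = k) ∧ (∀ i, 0 ≤ t i ∧ t i ≤ 1) ∧
        E = ∑ i, ENNReal.ofReal (p i) * alphaLoss α (t i)} := by
  apply le_antisymm
  · refine sInf_le_sInf ?_
    rintro E ⟨t, hsum, hbd, rfl⟩
    obtain ⟨Q, hQ, hQt⟩ := hypersimplex_subset_image_succProbLinearMap
      (show t ∈ hypersimplex (Fin n) k from ⟨hsum, hbd⟩)
    exact ⟨Q, hQ, by rw [← hQt]; rfl⟩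
  · refine le_sInf ?_
    rintro E ⟨Q, hQ, rfl⟩
    obtain ⟨t, ⟨hsum, hbd⟩, hle⟩ := exists_mem_hypersimplex_ge
      ((Fintype.card_fin n).symm ▸ hkn.le) (fun i => ⟨succProb_nonneg hQ i, succProb_le_one hQ i⟩)
      (sum_succProb_le hQ)
    refine sInf_le_of_le ⟨t, hsum, hbd, rfl⟩ (sum_le_sum fun i _ => ?_)
    exact mul_le_mul_right (alphaLoss_antitoneOn hα (succProb_nonneg hQ i)
      ((succProb_nonneg hQ i).trans (hle i)) (hle i)) _

/-- The minimal expected `α`-loss for `k` guesses equals the value of the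
finite-dimensional optimization problem over vectors `t ∈ [0,1]^n` with `Σ t_i = k`,
with objective `(α/(α-1)) Σ_i p_i (1 - t_i^{(α-1)/α}) = Σ_i p_i ℓ_α(t_i)`. -/
theorem minimal_alpha_loss_eq_finite_dim_min
    {n k : ℕ} (hk1 : 1 ≤ k) (hkn : k < n)
    (α : ℝ) (hα : 0 < α) (hα1 : α ≠ 1)
    (p : Fin n → ℝ) (hp0 : ∀ i, 0 < p i) (hp1 : ∑ i, p i = 1) :
    sInf {E : ℝ≥0∞ | ∃ Q : (Fin k → Fin n) → ℝ, IsStrategy Q ∧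
        E = ∑ i, ENNReal.ofReal (p i) * alphaLoss α (succProb Q i)} =
      sInf {E : ℝ≥0∞ | ∃ t : Fin n → ℝ,
        (∑ i, t i = k) ∧ (∀ i, 0 ≤ t i ∧ t i ≤ 1) ∧
        E = ∑ i, ENNReal.ofReal (p i) * alphaLoss α (t i)} :=
  minimal_alpha_loss_eq_finite_dim_min_general hkn α hα p
end

section
/- Let p_1 ≥ p_2 ≥ ... ≥ p_n > 0 with Σ p_i = 1, let 1 ≤ k < n, let α ∈ (0,1)∪(1,∞), and let s* = min{ r ∈ {1,...,k} : (k−r+1)·p_r^α / Σ_{i=r}^{n} p_i^α ≤ 1 }. Define t*_i = 1 for i ∈ [1:s*−1] and t*_i = (k−s*+1)·p_i^α / Σ_{j=s*}^{n} p_j^α for i ∈ [s*:n]. Then (t*_1,...,t*_n) satisfies 0 ≤ t*_i ≤ 1 for all i and Σ_{i=1}^{n} t*_i = k, and it attains the minimum of (α/(α−1)) · Σ_{i=1}^{n} p_i · (1 − t_i^{(α−1)/α}) over all (t_1,...,t_n) with Σ t_i = k and 0 ≤ t_i ≤ 1. -/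
open Finset
open scoped ENNReal

/-!
With the water level `c = (k - s* + 1) / Σ_{j ≥ s*} p_j^α`, sortedness and the minimality of `s*`
give `t*_i = min 1 (c p_i^α)`. The loss `ℓ` is convex with `ℓ'(t) = -t^{-1/α}`, and `t*` satisfies
the KKT conditions with multiplier `μ = c^{-1/α}`: the marginal `p_i t*_i^{-1/α}` equals `μ` where
`t*_i < 1` and is at least `μ` where `t*_i = 1`. Summing the tangent-line bounds
`p_i ℓ(t_i) ≥ p_i ℓ(t*_i) - μ (t_i - t*_i)` proves optimality, since `Σ t_i = Σ t*_i = k`.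
-/

noncomputable def realAlphaLoss (α t : ℝ) : ℝ :=
  (α / (α - 1)) * (1 - t ^ ((α - 1) / α))

theorem rpow_sub_one_div_le_sub_one {β x : ℝ} (hβ : β < 1) (hβ0 : β ≠ 0) (hx : 0 ≤ x)
    (hxβ : β < 0 → 0 < x) : (x ^ β - 1) / β ≤ x - 1 := by
  rcases hβ0.lt_or_gt with hneg | hpos
  · have hx0 := hxβ hneg
    have hexp : β * Real.log x + 1 ≤ x ^ β := by
      rw [Real.rpow_def_of_pos hx0, mul_comm]
      exact Real.add_one_le_exp _
    have hlog := Real.log_le_sub_one_of_pos hx0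
    rw [div_le_iff_of_neg hneg]
    nlinarith
  · have h := rpow_one_add_le_one_add_mul_self (s := x - 1) (by linarith) hpos.le hβ.le
    rw [add_sub_cancel] at h
    rw [div_le_iff₀ hpos]
    linarith

theorem rpow_sub_rpow_div_le {β u t : ℝ} (hβ : β < 1) (hβ0 : β ≠ 0) (hu : 0 < u) (ht : 0 ≤ t)
    (htβ : β < 0 → 0 < t) : (t ^ β - u ^ β) / β ≤ u ^ (β - 1) * (t - u) := by
  have hx := rpow_sub_one_div_le_sub_one hβ hβ0 (div_nonneg ht hu.le)
    fun h => div_pos (htβ h) hu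
  have hscale : t ^ β = u ^ β * (t / u) ^ β := by
    rw [Real.div_rpow ht hu.le]
    field_simp
  calc (t ^ β - u ^ β) / β = u ^ β * (((t / u) ^ β - 1) / β) := by rw [hscale]; ring
    _ ≤ u ^ β * (t / u - 1) := by gcongr
    _ = u ^ (β - 1) * (t - u) := by rw [Real.rpow_sub_one hu.ne']; field_simp

section RealAlphaLoss

variable {α u t : ℝ}

theorem realAlphaLoss_sub_le (hα : 0 < α) (hα1 : α ≠ 1) (hu : 0 < u) (ht : 0 ≤ t)
    (htα : α < 1 → 0 < t) :
    realAlphaLoss α u - u ^ (-α⁻¹) * (t - u) ≤ realAlphaLoss α t := by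
  set β := (α - 1) / α with hβ
  have hβ1 : β < 1 := (div_lt_one hα).mpr (by linarith)
  have hβ0 : β ≠ 0 := div_ne_zero (sub_ne_zero.mpr hα1) hα.ne'
  have hβα : β < 0 → α < 1 := fun h =>
    lt_of_not_ge fun h' => (div_nonneg (by linarith) hα.le).not_gt h
  have hβsub : β - 1 = -α⁻¹ := by rw [hβ]; field_simp; ring
  have hloss : ∀ x, realAlphaLoss α x = (1 - x ^ β) / β := fun x => by
    rw [realAlphaLoss, hβ]
    field_simp
  have h := rpow_sub_rpow_div_le hβ1 hβ0 hu ht (fun h => htα (hβα h))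
  rw [hβsub] at h
  have hdiff : (1 - u ^ β) / β - (1 - t ^ β) / β = (t ^ β - u ^ β) / β := by ring
  rw [hloss, hloss]
  linarith

theorem realAlphaLoss_nonneg (hα : 0 < α) (hα1 : α ≠ 1) (ht0 : 0 ≤ t) (ht1 : t ≤ 1)
    (htα : α < 1 → 0 < t) : 0 ≤ realAlphaLoss α t := by
  have h := realAlphaLoss_sub_le hα hα1 one_pos ht0 htα
  simp only [realAlphaLoss, Real.one_rpow, sub_self, mul_zero, zero_sub, one_mul] at h ⊢
  linarith

end RealAlphaLoss

theorem mul_mul_rpow_rpow_neg_inv {α c p : ℝ} (hα : α ≠ 0) (hc : 0 ≤ c) (hp : 0 < p) :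
    p * (c * p ^ α) ^ (-α⁻¹) = c ^ (-α⁻¹) := by
  rw [Real.mul_rpow hc (Real.rpow_nonneg hp.le _), ← Real.rpow_mul hp.le, mul_neg,
    mul_inv_cancel₀ hα, Real.rpow_neg_one]
  field_simp

theorem mul_realAlphaLoss_min_sub_le {α c p t : ℝ} (hα : 0 < α) (hα1 : α ≠ 1) (hc : 0 < c)
    (hp : 0 < p) (ht0 : 0 ≤ t) (ht1 : t ≤ 1) (htα : α < 1 → 0 < t) :
    p * realAlphaLoss α (min 1 (c * p ^ α)) - c ^ (-α⁻¹) * (t - min 1 (c * p ^ α)) ≤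
      p * realAlphaLoss α t := by
  set x := c * p ^ α
  have hx : 0 < x := mul_pos hc (Real.rpow_pos_of_pos hp α)
  have hμ : c ^ (-α⁻¹) = p * x ^ (-α⁻¹) := (mul_mul_rpow_rpow_neg_inv hα.ne' hc.le hp).symm
  have htangent := mul_le_mul_of_nonneg_left
    (realAlphaLoss_sub_le hα hα1 (lt_min one_pos hx) ht0 htα) hp.le
  rcases le_total x 1 with hx1 | hx1
  · rw [min_eq_right hx1] at htangent ⊢
    rw [hμ]
    linarith
  · rw [min_eq_left hx1] at htangent ⊢
    rw [Real.one_rpow] at htangent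
    have hμp : c ^ (-α⁻¹) ≤ p := hμ ▸ mul_le_of_le_one_right hp.le
      (Real.rpow_le_one_of_one_le_of_nonpos hx1 (by simp [hα.le]))
    nlinarith

section Optimality

variable {ι : Type*} {I : Finset ι} {α c : ℝ} {p u t : ι → ℝ}

theorem sum_mul_realAlphaLoss_le (hα : 0 < α) (hα1 : α ≠ 1) (hc : 0 < c)
    (hp : ∀ i ∈ I, 0 < p i) (hu : ∀ i ∈ I, u i = min 1 (c * p i ^ α))
    (hsum : ∑ i ∈ I, t i = ∑ i ∈ I, u i) (ht : ∀ i ∈ I, 0 ≤ t i ∧ t i ≤ 1)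
    (htα : ∀ i ∈ I, α < 1 → 0 < t i) :
    ∑ i ∈ I, p i * realAlphaLoss α (u i) ≤ ∑ i ∈ I, p i * realAlphaLoss α (t i) :=
  calc ∑ i ∈ I, p i * realAlphaLoss α (u i)
      = ∑ i ∈ I, (p i * realAlphaLoss α (u i) - c ^ (-α⁻¹) * (t i - u i)) := by
        rw [sum_sub_distrib, ← mul_sum, sum_sub_distrib, hsum, sub_self, mul_zero, sub_zero]
    _ ≤ ∑ i ∈ I, p i * realAlphaLoss α (t i) := sum_le_sum fun i hi => by
        rw [hu i hi]
        exact mul_realAlphaLoss_min_sub_le hα hα1 hc (hp i hi) (ht i hi).1 (ht i hi).2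
          (htα i hi)

theorem sum_ofReal_mul_alphaLoss_eq (hα : 0 < α) (hα1 : α ≠ 1) (hp : ∀ i ∈ I, 0 ≤ p i)
    (ht : ∀ i ∈ I, 0 ≤ t i ∧ t i ≤ 1) (htα : ∀ i ∈ I, α < 1 → 0 < t i) :
    ∑ i ∈ I, ENNReal.ofReal (p i) * alphaLoss α (t i) =
      ENNReal.ofReal (∑ i ∈ I, p i * realAlphaLoss α (t i)) := by
  rw [ENNReal.ofReal_sum_of_nonneg fun i hi => mul_nonneg (hp i hi)
    (realAlphaLoss_nonneg hα hα1 (ht i hi).1 (ht i hi).2 (htα i hi))]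
  refine sum_congr rfl fun i hi => ?_
  rw [alphaLoss, if_neg fun h => (htα i hi h.2).ne' h.1, ENNReal.ofReal_mul (hp i hi),
    realAlphaLoss]

theorem sum_ofReal_mul_alphaLoss_le (hα : 0 < α) (hα1 : α ≠ 1) (hc : 0 < c)
    (hp : ∀ i ∈ I, 0 < p i) (hu : ∀ i ∈ I, u i = min 1 (c * p i ^ α))
    (hsum : ∑ i ∈ I, t i = ∑ i ∈ I, u i) (ht : ∀ i ∈ I, 0 ≤ t i ∧ t i ≤ 1) :
    ∑ i ∈ I, ENNReal.ofReal (p i) * alphaLoss α (u i) ≤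
      ∑ i ∈ I, ENNReal.ofReal (p i) * alphaLoss α (t i) := by
  by_cases hzero : ∃ i ∈ I, t i = 0 ∧ α < 1
  · obtain ⟨i, hi, hti⟩ := hzero
    refine le_top.trans (top_le_iff.mpr (ENNReal.sum_eq_top.mpr ⟨i, hi, ?_⟩))
    rw [alphaLoss, if_pos hti]
    exact ENNReal.mul_top (ENNReal.ofReal_pos.mpr (hp i hi)).ne'
  push Not at hzero
  have htα : ∀ i ∈ I, α < 1 → 0 < t i := fun i hi hα' =>
    (ht i hi).1.lt_of_ne' fun h => (hzero i hi h).not_gt hα'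
  have hupos : ∀ i ∈ I, 0 < u i := fun i hi =>
    hu i hi ▸ lt_min one_pos (mul_pos hc (Real.rpow_pos_of_pos (hp i hi) α))
  have hp' : ∀ i ∈ I, 0 ≤ p i := fun i hi => (hp i hi).le
  rw [sum_ofReal_mul_alphaLoss_eq hα hα1 hp' ht htα, sum_ofReal_mul_alphaLoss_eq hα hα1 hp'
    (fun i hi => ⟨(hupos i hi).le, hu i hi ▸ min_le_left _ _⟩) fun i hi _ => hupos i hi]
  exact ENNReal.ofReal_le_ofReal (sum_mul_realAlphaLoss_le hα hα1 hc hp hu hsum ht htα)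

end Optimality

theorem sum_Icc_ite_lt (f : ℕ → ℝ) {s n : ℕ} (hs1 : 1 ≤ s) (hsn : s ≤ n + 1) :
    ∑ i ∈ Icc 1 n, (if i < s then 1 else f i) = (s - 1 : ℝ) + ∑ i ∈ Icc s n, f i := by
  rw [sum_ite]
  have hlt : (Icc 1 n).filter (· < s) = Ico 1 s := by
    ext i; simp only [mem_filter, mem_Icc, mem_Ico]; omega
  have hge : (Icc 1 n).filter (¬· < s) = Icc s n := by
    ext i; simp only [mem_filter, mem_Icc]; omega
  rw [hlt, hge, sum_const, Nat.card_Ico, nsmul_one, Nat.cast_sub hs1, Nat.cast_one]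

section Threshold

variable {n k : ℕ} {α : ℝ} {p : ℕ → ℝ} {s : ℕ}

def thresholdSet (n k : ℕ) (α : ℝ) (p : ℕ → ℝ) : Set ℕ :=
  {r | r ∈ Icc 1 k ∧ ((k : ℝ) - r + 1) * p r ^ α / (∑ i ∈ Icc r n, p i ^ α) ≤ 1}

noncomputable def waterLevel (n k : ℕ) (α : ℝ) (p : ℕ → ℝ) (r : ℕ) : ℝ :=
  ((k : ℝ) - r + 1) / ∑ i ∈ Icc r n, p i ^ α

theorem waterLevel_mul (n k : ℕ) (α : ℝ) (p : ℕ → ℝ) (r : ℕ) (x : ℝ) :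
    waterLevel n k α p r * x = ((k : ℝ) - r + 1) * x / ∑ i ∈ Icc r n, p i ^ α :=
  div_mul_eq_mul_div _ _ _

theorem sum_Icc_rpow_pos (hp0 : ∀ i ∈ Icc 1 n, 0 < p i) (hs1 : 1 ≤ s) (hsn : s ≤ n) :
    0 < ∑ i ∈ Icc s n, p i ^ α :=
  sum_pos (fun i hi => Real.rpow_pos_of_pos
      (hp0 i (mem_Icc.mpr ⟨hs1.trans (mem_Icc.mp hi).1, (mem_Icc.mp hi).2⟩)) α)
    ⟨s, mem_Icc.mpr ⟨le_rfl, hsn⟩⟩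

theorem waterLevel_pos (hp0 : ∀ i ∈ Icc 1 n, 0 < p i) (hs1 : 1 ≤ s) (hsk : s ≤ k)
    (hsn : s ≤ n) :
    0 < waterLevel n k α p s := by
  have : (s : ℝ) ≤ k := by exact_mod_cast hsk
  exact div_pos (by linarith) (sum_Icc_rpow_pos hp0 hs1 hsn)

theorem waterLevel_mul_rpow_le_one (hα : 0 < α) (hp0 : ∀ i ∈ Icc 1 n, 0 < p i)
    (hsorted : ∀ i j, 1 ≤ i → i ≤ j → j ≤ n → p j ≤ p i) (hs : s ∈ thresholdSet n k α p)
    {i : ℕ} (hsi : s ≤ i) (hin : i ≤ n) : waterLevel n k α p s * p i ^ α ≤ 1 := by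
  obtain ⟨hs1, hsk⟩ := mem_Icc.mp hs.1
  have hc := waterLevel_pos (α := α) hp0 hs1 hsk (hsi.trans hin)
  calc waterLevel n k α p s * p i ^ α ≤ waterLevel n k α p s * p s ^ α := by
        gcongr
        · exact (hp0 i (mem_Icc.mpr ⟨hs1.trans hsi, hin⟩)).le
        · exact hsorted s i hs1 hsi hin
    _ ≤ 1 := (waterLevel_mul n k α p s _).symm ▸ hs.2

theorem one_lt_waterLevel_mul_rpow_pred (hp0 : ∀ i ∈ Icc 1 n, 0 < p i)
    (hs : IsLeast (thresholdSet n k α p) s) (hsn : s ≤ n) (hs2 : 2 ≤ s) :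
    1 < waterLevel n k α p s * p (s - 1) ^ α := by
  have hS := sum_Icc_rpow_pos (α := α) hp0 (by omega : 1 ≤ s) hsn
  have hpr := Real.rpow_pos_of_pos (hp0 (s - 1) (mem_Icc.mpr ⟨by omega, by omega⟩)) α
  have hnot : s - 1 ∉ thresholdSet n k α p := fun h => by have := hs.2 h; omega
  have hsplit : ∑ i ∈ Icc (s - 1) n, p i ^ α = p (s - 1) ^ α + ∑ i ∈ Icc s n, p i ^ α := by
    rw [← insert_Icc_add_one_left_eq_Icc (by omega), sum_insert (by simp),
      Nat.sub_add_cancel (by omega)]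
  have hcast : ((s - 1 : ℕ) : ℝ) = s - 1 := by rw [Nat.cast_sub (by omega), Nat.cast_one]
  simp only [thresholdSet, Set.mem_ofPred_eq, mem_Icc, not_and, not_le] at hnot
  have hgt := hnot ⟨by omega, (hs.1.1 |> mem_Icc.mp).2.trans' (by omega)⟩
  rw [hsplit, hcast, one_lt_div (by positivity)] at hgt
  rw [waterLevel_mul, one_lt_div hS]
  linarith

theorem one_le_waterLevel_mul_rpow_of_lt (hα : 0 < α) (hp0 : ∀ i ∈ Icc 1 n, 0 < p i)
    (hsorted : ∀ i j, 1 ≤ i → i ≤ j → j ≤ n → p j ≤ p i)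
    (hs : IsLeast (thresholdSet n k α p) s) (hsn : s ≤ n) {i : ℕ} (hi : 1 ≤ i)
    (his : i < s) :
    1 ≤ waterLevel n k α p s * p i ^ α := by
  have hlt := one_lt_waterLevel_mul_rpow_pred hp0 hs hsn (by omega)
  refine hlt.le.trans ?_
  gcongr
  · obtain ⟨hs1, hsk⟩ := mem_Icc.mp hs.1.1
    exact (waterLevel_pos hp0 hs1 hsk hsn).le
  · exact (hp0 (s - 1) (mem_Icc.mpr ⟨by omega, by omega⟩)).le
  · exact hsorted i (s - 1) hi (by omega) (by omega)

end Threshold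

theorem optimal_vector_attains_minimum_general
    (n k : ℕ) (hkn : k < n)
    (α : ℝ) (hα : 0 < α) (hα1 : α ≠ 1)
    (p : ℕ → ℝ) (hp0 : ∀ i ∈ Finset.Icc 1 n, 0 < p i)
    (hsorted : ∀ i j, 1 ≤ i → i ≤ j → j ≤ n → p j ≤ p i)
    (s : ℕ)
    (hs : IsLeast {r : ℕ | r ∈ Finset.Icc 1 k ∧
        ((k : ℝ) - r + 1) * p r ^ α / (∑ i ∈ Finset.Icc r n, p i ^ α) ≤ 1} s)
    (tstar : ℕ → ℝ)
    (htstar : ∀ i, tstar i =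
      if i < s then 1
      else ((k : ℝ) - s + 1) * p i ^ α / (∑ j ∈ Finset.Icc s n, p j ^ α)) :
    (∀ i ∈ Finset.Icc 1 n, 0 ≤ tstar i ∧ tstar i ≤ 1) ∧
    (∑ i ∈ Finset.Icc 1 n, tstar i = k) ∧
    (∀ t : ℕ → ℝ, (∑ i ∈ Finset.Icc 1 n, t i = k) →
      (∀ i ∈ Finset.Icc 1 n, 0 ≤ t i ∧ t i ≤ 1) →
      (∑ i ∈ Finset.Icc 1 n, ENNReal.ofReal (p i) * alphaLoss α (tstar i)) ≤
        ∑ i ∈ Finset.Icc 1 n, ENNReal.ofReal (p i) * alphaLoss α (t i)) := by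
  obtain ⟨hs1, hsk⟩ := mem_Icc.mp hs.1.1
  have hsn : s ≤ n := hsk.trans hkn.le
  set c := waterLevel n k α p s
  have hc : 0 < c := waterLevel_pos hp0 hs1 hsk hsn
  have htstar_ite : ∀ i, tstar i = if i < s then 1 else c * p i ^ α := fun i => by
    rw [htstar, waterLevel_mul]
  have htstar_min : ∀ i ∈ Icc 1 n, tstar i = min 1 (c * p i ^ α) := fun i hi => by
    obtain ⟨hi1, hin⟩ := mem_Icc.mp hi
    rw [htstar_ite]
    split_ifs with his
    · exact (min_eq_left
        (one_le_waterLevel_mul_rpow_of_lt hα hp0 hsorted hs hsn hi1 his)).symm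
    · exact (min_eq_right
        (waterLevel_mul_rpow_le_one hα hp0 hsorted hs.1 (not_lt.mp his) hin)).symm
  have hsum : ∑ i ∈ Icc 1 n, tstar i = k := by
    rw [sum_congr rfl fun i _ => htstar_ite i, sum_Icc_ite_lt _ hs1 (by omega), ← mul_sum,
      waterLevel_mul, mul_div_cancel_right₀ _ (sum_Icc_rpow_pos hp0 hs1 hsn).ne']
    ring
  refine ⟨fun i hi => ?_, hsum, fun t ht hfeas =>
    sum_ofReal_mul_alphaLoss_le hα hα1 hc hp0 htstar_min (ht.trans hsum.symm) hfeas⟩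
  rw [htstar_min i hi]
  exact ⟨le_min zero_le_one (mul_pos hc (Real.rpow_pos_of_pos (hp0 i hi) α)).le,
    min_le_left _ _⟩

/-- The optimizer of the finite-dimensional problem: `t*_i = 1` for `i ≤ s* − 1` and
`t*_i = (k−s*+1)·p_i^α / Σ_{j=s*}^n p_j^α` for `i ≥ s*` is feasible (entries in `[0,1]`
summing to `k`) and attains the minimum of the expected `α`-loss objective
`Σ_i p_i ℓ_α(t_i)` over all feasible `t`.  Indices are 1-based: `p i` for
`i ∈ {1, …, n}`. -/
theorem optimal_vector_attains_minimum
    (n k : ℕ) (hk1 : 1 ≤ k) (hkn : k < n)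
    (α : ℝ) (hα : 0 < α) (hα1 : α ≠ 1)
    (p : ℕ → ℝ) (hp0 : ∀ i ∈ Finset.Icc 1 n, 0 < p i)
    (hp1 : ∑ i ∈ Finset.Icc 1 n, p i = 1)
    (hsorted : ∀ i j, 1 ≤ i → i ≤ j → j ≤ n → p j ≤ p i)
    (s : ℕ)
    (hs : IsLeast {r : ℕ | r ∈ Finset.Icc 1 k ∧
        ((k : ℝ) - r + 1) * p r ^ α / (∑ i ∈ Finset.Icc r n, p i ^ α) ≤ 1} s)
    (tstar : ℕ → ℝ)
    (htstar : ∀ i, tstar i =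
      if i < s then 1
      else ((k : ℝ) - s + 1) * p i ^ α / (∑ j ∈ Finset.Icc s n, p j ^ α)) :
    (∀ i ∈ Finset.Icc 1 n, 0 ≤ tstar i ∧ tstar i ≤ 1) ∧
    (∑ i ∈ Finset.Icc 1 n, tstar i = k) ∧
    (∀ t : ℕ → ℝ, (∑ i ∈ Finset.Icc 1 n, t i = k) →
      (∀ i ∈ Finset.Icc 1 n, 0 ≤ t i ∧ t i ≤ 1) →
      (∑ i ∈ Finset.Icc 1 n, ENNReal.ofReal (p i) * alphaLoss α (tstar i)) ≤
        ∑ i ∈ Finset.Icc 1 n, ENNReal.ofReal (p i) * alphaLoss α (t i)) :=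
  optimal_vector_attains_minimum_general n k hkn α hα hα1 p hp0 hsorted s hs tstar htstar
end
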